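/- Let P and Q be finite posets, R an indecomposable commutative unital ring and Φ : I^3(P,R) → I^3(Q,R) an isomorphism. Then for all x < y in P with l(x,y) = 1 there exist u < v in Q with l(u,v) = 1 and σ ∈ J^3_2(Q,R) such that Φ(e_{xxy} + e_{xyy}) = e_{uuv} + e_{uvv} + σ. -/

import Mathlib

/-!
Modulo `J^3_2` an element of `I^3` is determined by its values on the diagonal flags `(s,s,s)`
and on the flags `(p,p,q)`, `(p,q,q)` of the covers `p ⋖ q`. The ideal `J^3_2` has the purely
multiplicative description `[K·K, K·K]` with `K = [I, I]`, so `Φ` preserves it. The image `ε`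
of the idempotent `e = e_{xxy} + e_{xyy}` is again idempotent and, being a sum of commutators,
vanishes on the diagonal; on a cover `p ⋖ q` idempotency then forces `ε(p,p,q) = ε(p,q,q)` to be
an idempotent of `R`, hence `0` or `1`. As `e ∉ J^3_2`, some cover carries the value `1`. It is
the only one: modulo `J^3_2` the solutions of `e z = z` are the multiples of `e`, and `Φ`
transports this to `ε`.
-/

/-- 3-flags (chains x ≤ y ≤ z) in a poset `P`. -/
abbrev Flag3 (P : Type*) [PartialOrder P] : Type _ :=
  {t : P × P × P // t.1 ≤ t.2.1 ∧ t.2.1 ≤ t.2.2}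

/-- `ell x y` is the length of the interval `[x,y]`, i.e. the maximal cardinality of a
chain in `[x,y]` minus one. -/
noncomputable def ell {P : Type*} [PartialOrder P] (x y : P) : ℕ∞ :=
  (Set.Icc x y).chainHeight (· < ·) - 1

section PreDefs

variable (P R : Type*) [PartialOrder P] [LocallyFiniteOrder P] [CommRing R]

/-- The multiplication of the partial flag incidence algebra `I^3(P,R)`. -/
def mul3 : (Flag3 P → R) → (Flag3 P → R) → (Flag3 P → R) := fun f g t =>
  ∑ p ∈ ((Finset.Icc t.1.1 t.1.2.1) ×ˢ (Finset.Icc t.1.2.1 t.1.2.2)).attach,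
    f ⟨(t.1.1, p.1.1, p.1.2), by
        obtain ⟨h1, h2⟩ := Finset.mem_product.mp p.2
        rw [Finset.mem_Icc] at h1 h2
        exact ⟨h1.1, h1.2.trans h2.1⟩⟩ *
    g ⟨(p.1.1, p.1.2, t.1.2.2), by
        obtain ⟨h1, h2⟩ := Finset.mem_product.mp p.2
        rw [Finset.mem_Icc] at h1 h2
        exact ⟨h1.2.trans h2.1, h2.2⟩⟩

variable {P}

/-- The standard basis element `e_t` of `I^3(P,R)`. -/
def e3 [DecidableEq P] (t0 : Flag3 P) : Flag3 P → R := fun t => if t = t0 then 1 else 0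

variable (P)

/-- The ideal `J^3_k(P,R)` of functions vanishing on flags `(x,y,z)` with `l(x,z) < k`. -/
def J3 (k : ℕ) : Submodule R (Flag3 P → R) where
  carrier := {f | ∀ t : Flag3 P, ell t.1.1 t.1.2.2 < (k : ℕ∞) → f t = 0}
  add_mem' := by
    intro f g hf hg t ht
    simp only [Pi.add_apply, hf t ht, hg t ht, add_zero]
  zero_mem' := by intro t _; rfl
  smul_mem' := by
    intro c f hf t ht
    simp only [Pi.smul_apply, hf t ht, smul_zero]

/-- The commutator submodule `[U,V]`. -/
def commSub (U V : Submodule R (Flag3 P → R)) : Submodule R (Flag3 P → R) :=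
  Submodule.span R {h | ∃ f ∈ U, ∃ g ∈ V, h = mul3 P R f g - mul3 P R g f}

end PreDefs

namespace Flag3

variable {X : Type*} [PartialOrder X]

abbrev diag (s : X) : Flag3 X := ⟨(s, s, s), le_rfl, le_rfl⟩

abbrev lower {p q : X} (h : p ≤ q) : Flag3 X := ⟨(p, p, q), le_rfl, h⟩

abbrev upper {p q : X} (h : p ≤ q) : Flag3 X := ⟨(p, q, q), h, le_rfl⟩

end Flag3

open Flag3

theorem CovBy.finsetIcc_eq {X : Type*} [PartialOrder X] [LocallyFiniteOrder X] [DecidableEq X]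
    {p q : X} (h : p ⋖ q) : Finset.Icc p q = {p, q} := by
  rw [← Finset.coe_inj, Finset.coe_Icc, h.Icc_eq, Finset.coe_pair]

section Incidence

variable {X R : Type*} [PartialOrder X] [LocallyFiniteOrder X] [CommRing R]

open Classical in
theorem mul3_apply (f g : Flag3 X → R) (t : Flag3 X) :
    mul3 X R f g t = ∑ p ∈ Finset.Icc t.1.1 t.1.2.1 ×ˢ Finset.Icc t.1.2.1 t.1.2.2,
      if h : t.1.1 ≤ p.1 ∧ p.1 ≤ p.2 ∧ p.2 ≤ t.1.2.2 then
        f ⟨(t.1.1, p.1, p.2), h.1, h.2.1⟩ * g ⟨(p.1, p.2, t.1.2.2), h.2⟩ else 0 := by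
  rw [mul3]
  conv_rhs => rw [← Finset.sum_attach]
  refine Finset.sum_congr rfl fun p _ => ?_
  obtain ⟨h1, h2⟩ := Finset.mem_product.mp p.2
  rw [Finset.mem_Icc] at h1 h2
  rw [dif_pos ⟨h1.1, h1.2.trans h2.1, h2.2⟩]

theorem mul3_apply_diag (f g : Flag3 X → R) (s : X) :
    mul3 X R f g (diag s) = f (diag s) * g (diag s) := by
  simp [mul3_apply]

variable [DecidableEq X]

theorem mul3_apply_lower (f g : Flag3 X → R) {p q : X} (h : p ⋖ q) :
    mul3 X R f g (lower h.le) =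
      f (diag p) * g (lower h.le) + f (lower h.le) * g (upper h.le) := by
  rw [mul3_apply, Finset.Icc_self, h.finsetIcc_eq, Finset.singleton_product,
    Finset.map_insert, Finset.map_singleton, Finset.sum_pair (by simp [h.ne])]
  simp [h.le]

theorem mul3_apply_upper (f g : Flag3 X → R) {p q : X} (h : p ⋖ q) :
    mul3 X R f g (upper h.le) =
      f (lower h.le) * g (upper h.le) + f (upper h.le) * g (diag q) := by
  rw [mul3_apply, Finset.Icc_self, h.finsetIcc_eq, Finset.product_singleton,
    Finset.map_insert, Finset.map_singleton, Finset.sum_pair (by simp [h.ne])]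
  simp [h.le]

end Incidence

section Length

variable {X : Type*} [PartialOrder X]

theorem three_le_chainHeight_Icc_iff {a c : X} :
    3 ≤ (Set.Icc a c).chainHeight (· < ·) ↔ ∃ m, a < m ∧ m < c := by
  constructor
  · intro h
    obtain ⟨t, hts, hcard, -⟩ := Set.exists_isChain_of_le_chainHeight 3 h
    by_contra! hno
    have hsub : t ⊆ {a, c} := fun m hm => by
      obtain ⟨ham, hmc⟩ := hts hm
      rcases ham.eq_or_lt with rfl | ham
      · exact .inl rfl
      · exact .inr (hmc.lt_or_eq.resolve_left (hno m ham))
    have h3 : t.encard ≤ 2 :=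
      (Set.encard_le_encard hsub).trans ((Set.encard_insert_le _ _).trans (by norm_num))
    rw [hcard] at h3
    norm_num at h3
  · rintro ⟨m, ham, hmc⟩
    have hchain : IsChain (· < ·) ({a, m, c} : Set X) := by
      simp [IsChain, Set.Pairwise, ham, hmc, ham.trans hmc]
    calc (3 : ℕ∞) = ({a, m, c} : Set X).encard := by
          rw [Set.encard_insert_of_notMem (by simp [ham.ne, (ham.trans hmc).ne]),
            Set.encard_pair hmc.ne]
          rfl
      _ ≤ _ := Set.encard_le_chainHeight_of_isChain _ _
          (by simp [Set.insert_subset_iff, ham.le, hmc.le, (ham.trans hmc).le]) hchain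

theorem ell_lt_two_iff {a c : X} : ell a c < 2 ↔ ∀ m, a < m → ¬ m < c := by
  have : ell a c < 2 ↔ (Set.Icc a c).chainHeight (· < ·) < 3 := by
    rw [ell]
    cases (Set.Icc a c).chainHeight (· < ·) using ENat.recTopCoe with
    | top => simp
    | coe n => norm_cast; omega
  rw [this, ← not_le, three_le_chainHeight_Icc_iff]
  simp

theorem ell_self_lt_two (s : X) : ell s s < 2 :=
  ell_lt_two_iff.mpr fun _ h₁ h₂ => (h₁.trans h₂).false

theorem CovBy.ell_lt_two {p q : X} (h : p ⋖ q) : ell p q < 2 :=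
  ell_lt_two_iff.mpr h.2

theorem covBy_iff_ell_lt_two {p q : X} (h : p < q) : p ⋖ q ↔ ell p q < 2 :=
  ⟨CovBy.ell_lt_two, fun h' => ⟨h, ell_lt_two_iff.mp h'⟩⟩

theorem CovBy.ell_eq_one {p q : X} (h : p ⋖ q) : ell p q = 1 := by
  have hchain : IsChain (· < ·) ({p, q} : Set X) := IsChain.pair h.lt
  rw [ell, h.Icc_eq, ← Set.encard_eq_chainHeight_of_isChain _ hchain, Set.encard_pair h.ne]
  rfl

theorem Flag3.eq_diag_or_covBy (t : Flag3 X) (h : ell t.1.1 t.1.2.2 < 2) :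
    (∃ s, t = diag s) ∨ ∃ p q, ∃ hpq : p ⋖ q, t = lower hpq.le ∨ t = upper hpq.le := by
  obtain ⟨⟨a, b, c⟩, hab, hbc⟩ := t
  dsimp only at hab hbc h
  rcases eq_or_lt_of_le (hab.trans hbc) with rfl | hac
  · obtain rfl := le_antisymm hbc hab
    exact .inl ⟨b, rfl⟩
  have hcov : a ⋖ c := (covBy_iff_ell_lt_two hac).mpr h
  refine .inr ⟨a, c, hcov, ?_⟩
  rcases eq_or_lt_of_le hab with rfl | hab'
  · exact .inl rfl
  rcases eq_or_lt_of_le hbc with rfl | hbc'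
  · exact .inr rfl
  exact absurd hbc' (hcov.2 hab')

end Length

section SmallFlags

variable (X R : Type*) [PartialOrder X] [CommRing R]

def diagZero : Submodule R (Flag3 X → R) where
  carrier := {f | ∀ s, f (diag s) = 0}
  add_mem' := by simp_all
  zero_mem' := by simp
  smul_mem' := by simp_all

def coverSymm : Submodule R (Flag3 X → R) where
  carrier := {f | f ∈ diagZero X R ∧ ∀ p q (h : p ⋖ q), f (lower h.le) = f (upper h.le)}
  add_mem' := by simp_all [diagZero]
  zero_mem' := by simp [diagZero]
  smul_mem' := by simp_all [diagZero]

variable {X R}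

@[simp]
theorem mem_diagZero {f : Flag3 X → R} : f ∈ diagZero X R ↔ ∀ s, f (diag s) = 0 := Iff.rfl

theorem mem_coverSymm {f : Flag3 X → R} :
    f ∈ coverSymm X R ↔
      f ∈ diagZero X R ∧ ∀ p q (h : p ⋖ q), f (lower h.le) = f (upper h.le) := Iff.rfl

theorem mem_J3_two_iff {f : Flag3 X → R} :
    f ∈ J3 X R 2 ↔
      (∀ s, f (diag s) = 0) ∧ ∀ p q (h : p ⋖ q), f (lower h.le) = 0 ∧ f (upper h.le) = 0 := by
  constructor
  · intro hf
    exact ⟨fun s => hf _ (ell_self_lt_two s),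
      fun p q h => ⟨hf _ h.ell_lt_two, hf _ h.ell_lt_two⟩⟩
  · rintro ⟨hdiag, hcov⟩ t ht
    rcases t.eq_diag_or_covBy ht with ⟨s, rfl⟩ | ⟨p, q, h, rfl | rfl⟩
    exacts [hdiag s, (hcov p q h).1, (hcov p q h).2]

theorem sub_mem_J3_two_iff {f g : Flag3 X → R} :
    f - g ∈ J3 X R 2 ↔
      (∀ s, f (diag s) = g (diag s)) ∧
        ∀ p q (h : p ⋖ q), f (lower h.le) = g (lower h.le) ∧ f (upper h.le) = g (upper h.le) := by
  simp [mem_J3_two_iff, sub_eq_zero]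

end SmallFlags

section Basis

variable {X : Type*} [PartialOrder X] [LocallyFiniteOrder X] [DecidableEq X]
variable (R : Type*) [CommRing R]

-- `e3Icc R x z b b` is the basis element `e_{xbz}`, and the product of two basis elements is
-- always of the form `e3Icc`.
def e3Icc (x z u v : X) : Flag3 X → R := fun t =>
  if t.1.1 = x ∧ t.1.2.2 = z ∧ t.1.2.1 ∈ Finset.Icc u v then 1 else 0

variable {R}

open Classical in
theorem e3Icc_mul_e3Icc (x₁ z₁ u₁ v₁ x₂ z₂ u₂ v₂ : X) :
    mul3 X R (e3Icc R x₁ z₁ u₁ v₁) (e3Icc R x₂ z₂ u₂ v₂) =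
      if x₁ ≤ x₂ ∧ z₁ ≤ z₂ ∧ x₂ ∈ Finset.Icc u₁ v₁ ∧ z₁ ∈ Finset.Icc u₂ v₂ then
        e3Icc R x₁ z₂ x₂ z₁ else 0 := by
  funext ⟨⟨a, b, c⟩, hab, hbc⟩
  rw [mul3_apply]
  by_cases hmem : (x₂, z₁) ∈ Finset.Icc a b ×ˢ Finset.Icc b c
  · rw [Finset.sum_eq_single_of_mem _ hmem]
    · simp only [e3Icc, ite_apply, Pi.zero_apply, Finset.mem_product, Finset.mem_Icc] at hmem ⊢
      split_ifs <;> grind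
    · rintro ⟨p₁, p₂⟩ - hp
      simp only [e3Icc]
      split_ifs <;> grind
  · rw [Finset.sum_eq_zero]
    · simp only [e3Icc, ite_apply, Pi.zero_apply, Finset.mem_product, Finset.mem_Icc] at hmem ⊢
      split_ifs <;> grind
    · rintro ⟨p₁, p₂⟩ hp
      simp only [e3Icc, Finset.mem_product, Finset.mem_Icc] at hp hmem ⊢
      split_ifs <;> grind

theorem e3Icc_eq_sum (x z u v : X) :
    e3Icc R x z u v = ∑ b ∈ Finset.Icc u v, e3Icc R x z b b := by
  funext ⟨⟨a, b, c⟩, hab, hbc⟩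
  simp only [e3Icc, Finset.sum_apply, Finset.Icc_self, Finset.mem_singleton]
  by_cases h : a = x ∧ c = z
  · obtain ⟨rfl, rfl⟩ := h
    simp only [true_and, Finset.sum_ite_eq]
  · rw [if_neg (by tauto), Finset.sum_eq_zero fun _ _ => if_neg (by tauto)]

theorem e3_eq_e3Icc (t : Flag3 X) : e3 R t = e3Icc R t.1.1 t.1.2.2 t.1.2.1 t.1.2.1 := by
  funext s
  simp only [e3, e3Icc, Finset.Icc_self, Finset.mem_singleton, Subtype.ext_iff, Prod.ext_iff]
  grind

theorem e3_add_e3_eq_e3Icc {x y : X} (h : x ⋖ y) :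
    e3 R (lower h.le) + e3 R (upper h.le) = e3Icc R x y x y := by
  rw [e3_eq_e3Icc, e3_eq_e3Icc, e3Icc_eq_sum x y x y, h.finsetIcc_eq, Finset.sum_pair h.ne]

end Basis

section Ideals

variable (X R : Type*) [PartialOrder X] [LocallyFiniteOrder X] [CommRing R]

def prodSpan (U V : Submodule R (Flag3 X → R)) : Submodule R (Flag3 X → R) :=
  Submodule.span R {h | ∃ f ∈ U, ∃ g ∈ V, h = mul3 X R f g}

def algJ2 : Submodule R (Flag3 X → R) :=
  commSub X R (prodSpan X R (commSub X R ⊤ ⊤) (commSub X R ⊤ ⊤))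
    (prodSpan X R (commSub X R ⊤ ⊤) (commSub X R ⊤ ⊤))

variable {X R}

theorem commSub_top_le_diagZero : commSub X R ⊤ ⊤ ≤ diagZero X R := by
  rw [commSub, Submodule.span_le]
  rintro _ ⟨f, -, g, -, rfl⟩
  simp [mul3_apply_diag, mul_comm]

theorem mem_commSub_of_mul3_eq {U V : Submodule R (Flag3 X → R)} {f g h : Flag3 X → R}
    (hf : f ∈ U) (hg : g ∈ V) (hfg : mul3 X R f g = h) (hgf : mul3 X R g f = 0) :
    h ∈ commSub X R U V :=
  Submodule.subset_span ⟨f, hf, g, hg, by rw [hfg, hgf, sub_zero]⟩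

variable [DecidableEq X]

theorem prodSpan_le_coverSymm {U V : Submodule R (Flag3 X → R)} (hU : U ≤ diagZero X R)
    (hV : V ≤ diagZero X R) : prodSpan X R U V ≤ coverSymm X R := by
  rw [prodSpan, Submodule.span_le]
  rintro _ ⟨f, hf, g, hg, rfl⟩
  refine ⟨fun s => by simp [mul3_apply_diag, hU hf s], fun p q h => ?_⟩
  simp [mul3_apply_lower _ _ h, mul3_apply_upper _ _ h, hU hf p, hV hg q]

theorem commSub_le_J3_two {U V : Submodule R (Flag3 X → R)} (hU : U ≤ coverSymm X R)
    (hV : V ≤ coverSymm X R) : commSub X R U V ≤ J3 X R 2 := by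
  rw [commSub, Submodule.span_le]
  rintro _ ⟨f, hf, g, hg, rfl⟩
  obtain ⟨hfd, hfc⟩ := mem_coverSymm.mp (hU hf)
  obtain ⟨hgd, hgc⟩ := mem_coverSymm.mp (hV hg)
  rw [mem_diagZero] at hfd hgd
  rw [SetLike.mem_coe, mem_J3_two_iff]
  refine ⟨fun s => by simp [mul3_apply_diag, mul_comm], fun p q h => ?_⟩
  simp [mul3_apply_lower _ _ h, mul3_apply_upper _ _ h, hfd, hgd, hfc p q h, hgc p q h,
    mul_comm]

theorem algJ2_le_J3_two : algJ2 X R ≤ J3 X R 2 :=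
  have hS := prodSpan_le_coverSymm commSub_top_le_diagZero commSub_top_le_diagZero
  commSub_le_J3_two hS hS

theorem e3Icc_mem_commSub_top {x y z : X} (hxy : x ≤ y) (hyz : y ≤ z) (hxz : x ≠ z) :
    e3Icc R x z y y ∈ commSub X R ⊤ ⊤ := by
  refine mem_commSub_of_mul3_eq (f := e3Icc R x y y y) (g := e3Icc R y z y y) trivial trivial
    ?_ ?_ <;> rw [e3Icc_mul_e3Icc]
  · simp [hxy, hyz]
  · rw [if_neg fun h => hxz ((le_antisymm hxy h.1).trans (le_antisymm h.2.1 hyz).symm)]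

theorem e3Icc_mem_prodSpan {a b c d : X} (hab : a ≤ b) (hbc : b ≤ c) (hcd : c ≤ d)
    (hac : a ≠ c) (hbd : b ≠ d) :
    e3Icc R a d b c ∈ prodSpan X R (commSub X R ⊤ ⊤) (commSub X R ⊤ ⊤) :=
  Submodule.subset_span ⟨e3Icc R a c b b, e3Icc_mem_commSub_top hab hbc hac,
    e3Icc R b d c c, e3Icc_mem_commSub_top hbc hcd hbd, by simp [e3Icc_mul_e3Icc, hab, hcd]⟩

end Ideals

section Generation

variable {X R : Type*} [PartialOrder X] [LocallyFiniteOrder X] [DecidableEq X] [CommRing R]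

theorem e3Icc_mem_algJ2_of_lt_of_lt {x b z : X} (hxb : x < b) (hbz : b < z) :
    e3Icc R x z b b ∈ algJ2 X R := by
  refine mem_commSub_of_mul3_eq (f := e3Icc R x b x b) (g := e3Icc R b z b z)
    (e3Icc_mem_prodSpan le_rfl hxb.le le_rfl hxb.ne hxb.ne)
    (e3Icc_mem_prodSpan le_rfl hbz.le le_rfl hbz.ne hbz.ne) ?_ ?_ <;> rw [e3Icc_mul_e3Icc]
  · simp [hxb.le, hbz.le]
  · simp [hxb.not_ge]

theorem e3Icc_mem_algJ2_of_forall_mem_erase {x z u v b₀ : X} (hb₀ : b₀ ∈ Finset.Icc u v)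
    (hθ : e3Icc R x z u v ∈ algJ2 X R)
    (hmid : ∀ b ∈ (Finset.Icc u v).erase b₀, x < b ∧ b < z) :
    e3Icc R x z b₀ b₀ ∈ algJ2 X R := by
  have hsplit := Finset.add_sum_erase _ (fun b => e3Icc R x z b b) hb₀
  rw [← e3Icc_eq_sum] at hsplit
  rw [eq_sub_of_add_eq hsplit]
  exact sub_mem hθ (sum_mem fun b hb => e3Icc_mem_algJ2_of_lt_of_lt (hmid b hb).1 (hmid b hb).2)

theorem e3Icc_left_mem_algJ2 {x m z : X} (hxm : x < m) (hmz : m < z) :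
    e3Icc R x z x x ∈ algJ2 X R := by
  have hθ : e3Icc R x z x m ∈ algJ2 X R := by
    refine mem_commSub_of_mul3_eq (f := e3Icc R x m x m) (g := e3Icc R x z m m)
      (e3Icc_mem_prodSpan le_rfl hxm.le le_rfl hxm.ne hxm.ne)
      (e3Icc_mem_prodSpan hxm.le le_rfl hmz.le hxm.ne hmz.ne) ?_ ?_ <;> rw [e3Icc_mul_e3Icc]
    · simp [hxm.le, hmz.le]
    · simp [hxm.ne]
  refine e3Icc_mem_algJ2_of_forall_mem_erase (Finset.left_mem_Icc.mpr hxm.le) hθ fun b hb => ?_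
  obtain ⟨hbx, hb⟩ := Finset.mem_erase.mp hb
  obtain ⟨hxb, hbm⟩ := Finset.mem_Icc.mp hb
  exact ⟨hxb.lt_of_ne' hbx, hbm.trans_lt hmz⟩

theorem e3Icc_right_mem_algJ2 {x m z : X} (hxm : x < m) (hmz : m < z) :
    e3Icc R x z z z ∈ algJ2 X R := by
  have hθ : e3Icc R x z m z ∈ algJ2 X R := by
    refine mem_commSub_of_mul3_eq (f := e3Icc R x z m m) (g := e3Icc R m z m z)
      (e3Icc_mem_prodSpan hxm.le le_rfl hmz.le hxm.ne hmz.ne)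
      (e3Icc_mem_prodSpan le_rfl hmz.le le_rfl hmz.ne hmz.ne) ?_ ?_ <;> rw [e3Icc_mul_e3Icc]
    · simp [hxm.le, hmz.le]
    · simp [hxm.not_ge]
  refine e3Icc_mem_algJ2_of_forall_mem_erase (Finset.right_mem_Icc.mpr hmz.le) hθ fun b hb => ?_
  obtain ⟨hbz, hb⟩ := Finset.mem_erase.mp hb
  obtain ⟨hmb, hbz'⟩ := Finset.mem_Icc.mp hb
  exact ⟨hxm.trans_le hmb, hbz'.lt_of_ne hbz⟩

theorem e3Icc_mem_algJ2 {x b z : X} (hxb : x ≤ b) (hbz : b ≤ z) (h : ¬ ell x z < 2) :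
    e3Icc R x z b b ∈ algJ2 X R := by
  rw [ell_lt_two_iff] at h
  obtain ⟨m, hxm, hmz⟩ : ∃ m, x < m ∧ m < z := by simpa using h
  rcases eq_or_lt_of_le hxb with rfl | hxb
  · exact e3Icc_left_mem_algJ2 hxm hmz
  rcases eq_or_lt_of_le hbz with rfl | hbz
  · exact e3Icc_right_mem_algJ2 hxm hmz
  exact e3Icc_mem_algJ2_of_lt_of_lt hxb hbz

theorem J3_two_le_algJ2 [Finite X] : J3 X R 2 ≤ algJ2 X R := by
  intro f hf
  have := Fintype.ofFinite (Flag3 X)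
  rw [pi_eq_sum_univ' f]
  refine sum_mem fun t _ => ?_
  by_cases ht : ell t.1.1 t.1.2.2 < 2
  · rw [hf t ht, zero_smul]
    exact zero_mem _
  · have he : Pi.single t 1 = e3Icc R t.1.1 t.1.2.2 t.1.2.1 t.1.2.1 := by
      rw [← e3_eq_e3Icc]
      funext s
      simp [e3, Pi.single_apply]
    exact Submodule.smul_mem _ _ (he ▸ e3Icc_mem_algJ2 t.2.1 t.2.2 ht)

theorem algJ2_eq_J3_two [Finite X] : algJ2 X R = J3 X R 2 :=
  le_antisymm algJ2_le_J3_two J3_two_le_algJ2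

end Generation

section CoverUnit

variable {X R : Type*} [PartialOrder X] [LocallyFiniteOrder X] [DecidableEq X] [CommRing R]

theorem e3Icc_self_apply_diag {x y : X} (hxy : x ≠ y) (s : X) : e3Icc R x y x y (diag s) = 0 :=
  if_neg fun h => hxy (h.1.symm.trans h.2.1)

theorem e3Icc_self_apply_lower {x y p q : X} (h : p ≤ q) :
    e3Icc R x y x y (lower h) = if p = x ∧ q = y then 1 else 0 := by
  simp only [e3Icc, Finset.mem_Icc]
  grind

theorem e3Icc_self_apply_upper {x y p q : X} (h : p ≤ q) :
    e3Icc R x y x y (upper h) = if p = x ∧ q = y then 1 else 0 := by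
  simp only [e3Icc, Finset.mem_Icc]
  grind

theorem mul3_e3Icc_self {x y : X} (hxy : x ≤ y) :
    mul3 X R (e3Icc R x y x y) (e3Icc R x y x y) = e3Icc R x y x y := by
  simp [e3Icc_mul_e3Icc, hxy]

theorem e3Icc_self_mem_commSub_top {x y : X} (hxy : x < y) :
    e3Icc R x y x y ∈ commSub X R ⊤ ⊤ := by
  rw [e3Icc_eq_sum]
  refine sum_mem fun b hb => ?_
  obtain ⟨hxb, hby⟩ := Finset.mem_Icc.mp hb
  exact e3Icc_mem_commSub_top hxb hby hxy.ne

theorem CovBy.e3Icc_self_notMem_J3_two [Nontrivial R] {x y : X} (hxy : x ⋖ y) :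
    e3Icc R x y x y ∉ J3 X R 2 := fun h => by
  simpa [e3Icc_self_apply_lower] using ((mem_J3_two_iff.mp h).2 x y hxy).1

end CoverUnit

section Idempotent

variable {X R : Type*} [PartialOrder X] [LocallyFiniteOrder X] [DecidableEq X] [CommRing R]

theorem CovBy.apply_upper_eq_apply_lower_of_mul3_self {ε : Flag3 X → R}
    (hε : mul3 X R ε ε = ε) (hd : ε ∈ diagZero X R) {p q : X} (h : p ⋖ q) :
    ε (upper h.le) = ε (lower h.le) ∧ IsIdempotentElem (ε (lower h.le)) := by
  have hl : ε (lower h.le) = ε (lower h.le) * ε (upper h.le) := by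
    conv_lhs => rw [← hε]
    simp [mul3_apply_lower _ _ h, (mem_diagZero.mp hd) p]
  have hu : ε (upper h.le) = ε (lower h.le) * ε (upper h.le) := by
    conv_lhs => rw [← hε]
    simp [mul3_apply_upper _ _ h, (mem_diagZero.mp hd) q]
  have heq := hu.trans hl.symm
  exact ⟨heq, (congrArg (ε (lower h.le) * ·) heq).symm.trans hl.symm⟩

theorem mul3_sub_mem_J3_two_iff {ε : Flag3 X → R} (hd : ε ∈ diagZero X R) {z : Flag3 X → R} :
    mul3 X R ε z - z ∈ J3 X R 2 ↔
      (∀ s, z (diag s) = 0) ∧ ∀ p q (h : p ⋖ q),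
        ε (lower h.le) * z (upper h.le) = z (lower h.le) ∧
          ε (lower h.le) * z (upper h.le) = z (upper h.le) := by
  rw [mem_diagZero] at hd
  have hdiag : (∀ s, (mul3 X R ε z - z) (diag s) = 0) ↔ ∀ s, z (diag s) = 0 :=
    forall_congr' fun s => by simp [mul3_apply_diag, hd s]
  rw [mem_J3_two_iff, hdiag]
  refine and_congr_right fun hz => forall_congr' fun p => forall_congr' fun q =>
    forall_congr' fun h => ?_
  simp [mul3_apply_lower _ _ h, mul3_apply_upper _ _ h, hd p, hz q, sub_eq_zero]

theorem CovBy.sub_smul_e3Icc_mem_J3_two {x y : X} (hxy : x ⋖ y) {z : Flag3 X → R}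
    (hz : mul3 X R (e3Icc R x y x y) z - z ∈ J3 X R 2) :
    z - z (upper hxy.le) • e3Icc R x y x y ∈ J3 X R 2 := by
  have hd := commSub_top_le_diagZero (e3Icc_self_mem_commSub_top (R := R) hxy.lt)
  obtain ⟨hzd, hzc⟩ := (mul3_sub_mem_J3_two_iff hd).mp hz
  refine sub_mem_J3_two_iff.mpr ⟨fun s => by simp [hzd s, e3Icc_self_apply_diag hxy.ne],
    fun p q h => ?_⟩
  have hzpq := hzc p q h
  simp only [Pi.smul_apply, smul_eq_mul, e3Icc_self_apply_lower, e3Icc_self_apply_upper]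
    at hzpq ⊢
  split_ifs at hzpq ⊢ with hpq
  · obtain ⟨rfl, rfl⟩ := hpq
    simpa [eq_comm] using hzpq
  · simpa [eq_comm] using hzpq

theorem CovBy.mul3_sub_e3Icc_mem_J3_two {ε : Flag3 X → R} (hd : ε ∈ diagZero X R) {u v : X}
    (huv : u ⋖ v) (h1 : ε (lower huv.le) = 1) :
    mul3 X R ε (e3Icc R u v u v) - e3Icc R u v u v ∈ J3 X R 2 := by
  refine (mul3_sub_mem_J3_two_iff hd).mpr ⟨e3Icc_self_apply_diag huv.ne, fun p q h => ?_⟩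
  simp only [e3Icc_self_apply_lower, e3Icc_self_apply_upper]
  by_cases hpq : p = u ∧ q = v
  · obtain ⟨rfl, rfl⟩ := hpq
    simp [h1]
  · simp [hpq]

end Idempotent

theorem Submodule.map_span_setOf_op {R M N : Type*} [Semiring R] [AddCommMonoid M] [Module R M]
    [AddCommMonoid N] [Module R N] (φ : M →ₗ[R] N) {opM : M → M → M} {opN : N → N → N}
    (hφ : ∀ f g, φ (opM f g) = opN (φ f) (φ g)) (U V : Submodule R M) :
    (span R {h | ∃ f ∈ U, ∃ g ∈ V, h = opM f g}).map φ =
      span R {h | ∃ f ∈ U.map φ, ∃ g ∈ V.map φ, h = opN f g} := by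
  rw [map_span]
  congr 1
  ext h
  constructor
  · rintro ⟨_, ⟨f, hf, g, hg, rfl⟩, rfl⟩
    exact ⟨φ f, mem_map_of_mem hf, φ g, mem_map_of_mem hg, hφ f g⟩
  · rintro ⟨_, ⟨f, hf, rfl⟩, _, ⟨g, hg, rfl⟩, rfl⟩
    exact ⟨opM f g, ⟨f, hf, g, hg, rfl⟩, hφ f g⟩

section Transport

variable {P Q R : Type*} [PartialOrder P] [LocallyFiniteOrder P] [PartialOrder Q]
  [LocallyFiniteOrder Q] [CommRing R]

section LinearMap

variable (Φ : (Flag3 P → R) →ₗ[R] (Flag3 Q → R))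
  (hΦ : ∀ f g, Φ (mul3 P R f g) = mul3 Q R (Φ f) (Φ g))
include hΦ

theorem map_commSub (U V : Submodule R (Flag3 P → R)) :
    (commSub P R U V).map Φ = commSub Q R (U.map Φ) (V.map Φ) :=
  Submodule.map_span_setOf_op Φ (fun f g => by rw [map_sub, hΦ, hΦ]) U V

theorem map_prodSpan (U V : Submodule R (Flag3 P → R)) :
    (prodSpan P R U V).map Φ = prodSpan Q R (U.map Φ) (V.map Φ) :=
  Submodule.map_span_setOf_op Φ hΦ U V

theorem map_commSub_top (hsurj : Function.Surjective Φ) :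
    (commSub P R ⊤ ⊤).map Φ = commSub Q R ⊤ ⊤ := by
  rw [map_commSub Φ hΦ, Submodule.map_top, LinearMap.range_eq_top_of_surjective Φ hsurj]

theorem map_algJ2 (hsurj : Function.Surjective Φ) : (algJ2 P R).map Φ = algJ2 Q R := by
  rw [algJ2, map_commSub Φ hΦ, map_prodSpan Φ hΦ, map_commSub_top Φ hΦ hsurj, algJ2]

end LinearMap

variable (Φ : (Flag3 P → R) ≃ₗ[R] (Flag3 Q → R))
  (hΦ : ∀ f g, Φ (mul3 P R f g) = mul3 Q R (Φ f) (Φ g))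
include hΦ

theorem apply_mem_diagZero {f : Flag3 P → R} (hf : f ∈ commSub P R ⊤ ⊤) :
    Φ f ∈ diagZero Q R := by
  refine commSub_top_le_diagZero ?_
  rw [← map_commSub_top Φ.toLinearMap hΦ Φ.surjective]
  exact Submodule.mem_map_of_mem hf

variable [DecidableEq P] [DecidableEq Q]

theorem apply_mem_J3_two_iff [Finite P] [Finite Q] {f : Flag3 P → R} :
    Φ f ∈ J3 Q R 2 ↔ f ∈ J3 P R 2 := by
  rw [← algJ2_eq_J3_two, ← algJ2_eq_J3_two, ← map_algJ2 Φ.toLinearMap hΦ Φ.surjective,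
    Submodule.mem_map_equiv, LinearEquiv.symm_apply_apply]

theorem CovBy.eq_of_apply_lower_eq_one [Finite P] [Finite Q] [Nontrivial R] {x y : P}
    (hxy : x ⋖ y) {u v p q : Q} (huv : u ⋖ v) (hpq : p ⋖ q)
    (huv₁ : Φ (e3Icc R x y x y) (lower huv.le) = 1)
    (hpq₁ : Φ (e3Icc R x y x y) (lower hpq.le) = 1) : p = u ∧ q = v := by
  -- With `e = e3Icc R x y x y`, `z = Φ⁻¹ w` solves `e z ≡ z` modulo `J3`, so `z ≡ c e` and
  -- `w ≡ c (Φ e)`; evaluating at `(u,u,v)` and at `(p,p,q)` gives `c = 1` and `c = 0`.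
  have hd := apply_mem_diagZero Φ hΦ (e3Icc_self_mem_commSub_top hxy.lt)
  set w := e3Icc R u v u v
  have hz : mul3 P R (e3Icc R x y x y) (Φ.symm w) - Φ.symm w ∈ J3 P R 2 := by
    rw [← apply_mem_J3_two_iff Φ hΦ, map_sub, hΦ, Φ.apply_symm_apply]
    exact huv.mul3_sub_e3Icc_mem_J3_two hd huv₁
  have hc := (apply_mem_J3_two_iff Φ hΦ).mpr (hxy.sub_smul_e3Icc_mem_J3_two hz)
  rw [map_sub, map_smul, Φ.apply_symm_apply] at hc
  obtain ⟨-, hc⟩ := mem_J3_two_iff.mp hc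
  have hcuv := (hc u v huv).1
  have hcpq := (hc p q hpq).1
  by_contra hne
  simp [w, e3Icc_self_apply_lower, huv₁, hpq₁, hne, sub_eq_zero] at hcuv hcpq
  exact one_ne_zero (hcuv.trans hcpq)

theorem CovBy.exists_covBy_apply_e3Icc_sub_mem_J3_two [Finite P] [Finite Q] [Nontrivial R]
    (hR : ∀ r : R, IsIdempotentElem r → r = 0 ∨ r = 1) {x y : P} (hxy : x ⋖ y) :
    ∃ u v, u ⋖ v ∧ Φ (e3Icc R x y x y) - e3Icc R u v u v ∈ J3 Q R 2 := by
  set ε := Φ (e3Icc R x y x y)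
  have hidem : mul3 Q R ε ε = ε := by rw [← hΦ, mul3_e3Icc_self hxy.le]
  have hd : ε ∈ diagZero Q R := apply_mem_diagZero Φ hΦ (e3Icc_self_mem_commSub_top hxy.lt)
  have hcov := fun p q (h : p ⋖ q) => h.apply_upper_eq_apply_lower_of_mul3_self hidem hd
  obtain ⟨u, v, huv, hεuv⟩ : ∃ u v, ∃ huv : u ⋖ v, ε (lower huv.le) = 1 := by
    by_contra! hne
    refine hxy.e3Icc_self_notMem_J3_two ((apply_mem_J3_two_iff Φ hΦ).mp ?_)
    refine mem_J3_two_iff.mpr ⟨hd, fun p q h => ?_⟩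
    have h0 := (hR _ (hcov p q h).2).resolve_right (hne p q h)
    exact ⟨h0, (hcov p q h).1.trans h0⟩
  have hεcov : ∀ p q (h : p ⋖ q), ε (lower h.le) = if p = u ∧ q = v then 1 else 0 := by
    intro p q h
    split_ifs with hpq
    · obtain ⟨rfl, rfl⟩ := hpq
      exact hεuv
    · exact (hR _ (hcov p q h).2).resolve_right
        fun h₁ => hpq (hxy.eq_of_apply_lower_eq_one Φ hΦ huv h hεuv h₁)
  refine ⟨u, v, huv, sub_mem_J3_two_iff.mpr
    ⟨fun s => by simp [hd s, e3Icc_self_apply_diag huv.ne], fun p q h => ?_⟩⟩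
  rw [(hcov p q h).1, e3Icc_self_apply_lower, e3Icc_self_apply_upper, hεcov p q h]
  exact ⟨rfl, rfl⟩

end Transport

/-- For finite posets `P`, `Q`, an indecomposable commutative ring `R` and
an isomorphism `Φ : I^3(P,R) → I^3(Q,R)`: for all `x < y` with `l(x,y) = 1` there exist
`u < v` with `l(u,v) = 1` and `σ ∈ J^3_2(Q,R)` such that
`Φ(e_{xxy} + e_{xyy}) = e_{uuv} + e_{uvv} + σ`. -/
theorem iso_image_of_cover_idempotent
    {P Q R : Type*} [PartialOrder P] [Fintype P] [DecidableEq P] [LocallyFiniteOrder P]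
    [PartialOrder Q] [Fintype Q] [DecidableEq Q] [LocallyFiniteOrder Q]
    [CommRing R] [Nontrivial R] (hR : ∀ r : R, r * r = r → r = 0 ∨ r = 1)
    (Φ : (Flag3 P → R) ≃ₗ[R] (Flag3 Q → R))
    (hΦ : ∀ f g : Flag3 P → R, Φ (mul3 P R f g) = mul3 Q R (Φ f) (Φ g)) :
    ∀ x y : P, ∀ hxy : x < y, ell x y = 1 →
      ∃ u v : Q, ∃ huv : u < v, ell u v = 1 ∧
        ∃ σ ∈ J3 Q R 2,
          Φ (e3 R (⟨(x, x, y), le_rfl, hxy.le⟩ : Flag3 P) +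
              e3 R (⟨(x, y, y), hxy.le, le_rfl⟩ : Flag3 P)) =
            e3 R (⟨(u, u, v), le_rfl, huv.le⟩ : Flag3 Q) +
              e3 R (⟨(u, v, v), huv.le, le_rfl⟩ : Flag3 Q) + σ := by
  intro x y hxy hell
  have hcov : x ⋖ y := (covBy_iff_ell_lt_two hxy).mpr (by rw [hell]; norm_num)
  obtain ⟨u, v, huv, hσ⟩ := hcov.exists_covBy_apply_e3Icc_sub_mem_J3_two Φ hΦ hR
  refine ⟨u, v, huv.lt, huv.ell_eq_one, _, hσ, ?_⟩
  rw [e3_add_e3_eq_e3Icc hcov, e3_add_e3_eq_e3Icc huv, add_sub_cancel]
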